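/- Assume in addition 2 c_β σ − 2ν + 1 > 0. Then for every integer t ≥ 1, Σ_{k=1}^{t} β_{k,t}² ≤ (4^{c_β σ} c_β² / (2 c_β σ − 2ν + 1)) · (t+2)^{1−2ν}. -/

import Mathlib

/-! Since `1 - x ≤ exp (-x) ≤ (1 + x)⁻¹` at `x = 1/(l+1)` and `β_l σ ≥ c_β σ/(l+1)`, each factor
obeys `1 - β_l σ ≤ ((l+1)/(l+2))^(c_β σ)`; the product telescopes, so
`β_{k,t} ≤ β_k ((k+2)/(t+2))^(c_β σ) ≤ 2^(c_β σ) c_β (k+1)^(c_β σ - ν) / (t+2)^(c_β σ)`.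
Squaring leaves `∑_{k=1}^t (k+1)^q` with `q = 2 c_β σ - 2ν > -1`, which is at most
`(t+2)^(q+1)/(q+1)`: by Bernoulli's inequality `(q+1) x^q` is bounded by a difference of
consecutive `(q+1)`-th powers, taken forwards when `q ≥ 0` and backwards when `q < 0`, and
these telescope. -/

open Finset Real

/-- The step size `β_t = c_β/(t+1)^ν`. -/
noncomputable def betaStep (cβ ν : ℝ) (t : ℕ) : ℝ := cβ / ((t : ℝ) + 1) ^ ν

/-- `β_{k,t} = β_k ∏_{l=k+1}^{t} (1 − β_l σ)`. -/
noncomputable def betaKT (cβ σ ν : ℝ) (k t : ℕ) : ℝ :=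
  betaStep cβ ν k * ∏ l ∈ Finset.Icc (k + 1) t, (1 - betaStep cβ ν l * σ)

lemma one_sub_div_rpow_le_div_add_one_rpow {a ν b : ℝ} (ha : 0 ≤ a) (hν : ν ≤ 1) (hb : 1 ≤ b) :
    1 - a / b ^ ν ≤ (b / (b + 1)) ^ a := by
  have hbν : b ^ ν ≤ b := by
    simpa using rpow_le_rpow_of_exponent_le hb hν
  have hexp : exp (-(1 / b)) ≤ b / (b + 1) := by
    rw [exp_neg, show b / (b + 1) = (1 / b + 1)⁻¹ by field_simp; ring]
    exact inv_anti₀ (by positivity) (add_one_le_exp _)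
  calc 1 - a / b ^ ν ≤ 1 - a / b := by gcongr
    _ ≤ exp (-(a / b)) := one_sub_le_exp_neg _
    _ = exp (-(1 / b)) ^ a := by rw [← exp_mul]; ring_nf
    _ ≤ (b / (b + 1)) ^ a := rpow_le_rpow (exp_pos _).le hexp ha

lemma prod_Icc_add_one_div_add_two {k t : ℕ} (hkt : k ≤ t) :
    ∏ l ∈ Icc (k + 1) t, ((l : ℝ) + 1) / ((l : ℝ) + 2) = ((k : ℝ) + 2) / ((t : ℝ) + 2) := by
  induction t, hkt using Nat.le_induction with
  | base => rw [Icc_eq_empty (by omega), prod_empty, div_self (by positivity)]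
  | succ n _ ih =>
    rw [prod_Icc_succ_top (by omega), ih]
    push_cast
    field_simp
    ring

lemma mul_rpow_sub_one_le_add_one_rpow_sub {p x : ℝ} (hp : 1 ≤ p) (hx : 0 < x) :
    p * x ^ (p - 1) ≤ (x + 1) ^ p - x ^ p := by
  have bernoulli : 1 + p * (1 / x) ≤ (1 + 1 / x) ^ p :=
    one_add_mul_self_le_rpow_one_add (by linarith [one_div_pos.2 hx]) hp
  have hsplit : (x + 1) ^ p = x ^ p * (1 + 1 / x) ^ p := by
    rw [← mul_rpow hx.le (by positivity)]
    field_simp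
  have hshift : x ^ p * (1 / x) = x ^ (p - 1) := by
    rw [rpow_sub_one hx.ne', ← div_eq_mul_one_div]
  rw [hsplit, ← hshift]
  nlinarith [mul_le_mul_of_nonneg_left bernoulli (rpow_pos_of_pos hx p).le]

lemma mul_rpow_sub_one_le_rpow_sub_sub_one_rpow {p x : ℝ} (hp0 : 0 ≤ p) (hp1 : p ≤ 1)
    (hx : 1 ≤ x) : p * x ^ (p - 1) ≤ x ^ p - (x - 1) ^ p := by
  have hx0 : 0 < x := one_pos.trans_le hx
  have hs : -1 ≤ -(1 / x) := by
    rw [neg_le_neg_iff, div_le_one hx0]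
    exact hx
  have bernoulli : (1 + -(1 / x)) ^ p ≤ 1 + p * -(1 / x) :=
    rpow_one_add_le_one_add_mul_self hs hp0 hp1
  have hsplit : (x - 1) ^ p = x ^ p * (1 + -(1 / x)) ^ p := by
    rw [← mul_rpow hx0.le (by linarith)]
    field_simp
    ring_nf
  have hshift : x ^ p * (1 / x) = x ^ (p - 1) := by
    rw [rpow_sub_one hx0.ne', ← div_eq_mul_one_div]
  rw [hsplit, ← hshift]
  nlinarith [mul_le_mul_of_nonneg_left bernoulli (rpow_pos_of_pos hx0 p).le]

lemma sum_Icc_le_sub_of_le_sub {g F : ℕ → ℝ} (h : ∀ k, g k ≤ F (k + 1) - F k) (t : ℕ) :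
    ∑ k ∈ Icc 1 t, g k ≤ F (t + 1) - F 1 := by
  rw [← Ico_add_one_right_eq_Icc]
  exact (sum_le_sum fun k _ => h k).trans_eq (sum_Ico_sub (f := F) (by omega))

lemma sum_Icc_add_one_rpow_le {q : ℝ} (hq : -1 < q) (t : ℕ) :
    ∑ k ∈ Icc 1 t, ((k : ℝ) + 1) ^ q ≤ ((t : ℝ) + 2) ^ (q + 1) / (q + 1) := by
  have hq1 : 0 < q + 1 := by linarith
  rw [le_div_iff₀ hq1, sum_mul]
  rcases le_or_gt 0 q with hq0 | hq0
  · calc ∑ k ∈ Icc 1 t, ((k : ℝ) + 1) ^ q * (q + 1)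
        ≤ (((t + 1 : ℕ) : ℝ) + 1) ^ (q + 1) - (((1 : ℕ) : ℝ) + 1) ^ (q + 1) := by
          refine sum_Icc_le_sub_of_le_sub (F := fun k => ((k : ℝ) + 1) ^ (q + 1)) (fun k => ?_) t
          have := mul_rpow_sub_one_le_add_one_rpow_sub (p := q + 1) (x := (k : ℝ) + 1)
            (by linarith) (by positivity)
          simp only [add_sub_cancel_right] at this
          push_cast
          linarith
      _ ≤ ((t : ℝ) + 2) ^ (q + 1) := by
          push_cast
          rw [show (t : ℝ) + 1 + 1 = t + 2 by ring]
          linarith [rpow_nonneg (by norm_num : (0 : ℝ) ≤ 1 + 1) (q + 1)]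
  · calc ∑ k ∈ Icc 1 t, ((k : ℝ) + 1) ^ q * (q + 1)
        ≤ ((t + 1 : ℕ) : ℝ) ^ (q + 1) - ((1 : ℕ) : ℝ) ^ (q + 1) := by
          refine sum_Icc_le_sub_of_le_sub (F := fun k => (k : ℝ) ^ (q + 1)) (fun k => ?_) t
          have := mul_rpow_sub_one_le_rpow_sub_sub_one_rpow (p := q + 1) (x := (k : ℝ) + 1)
            hq1.le (by linarith) (by simp)
          simp only [add_sub_cancel_right] at this
          push_cast
          linarith
      _ ≤ ((t : ℝ) + 2) ^ (q + 1) := by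
          push_cast
          rw [one_rpow]
          linarith [rpow_le_rpow (by positivity) (by linarith : (t : ℝ) + 1 ≤ t + 2) hq1.le]

section StepSizes

variable {cβ σ ν : ℝ} {k t : ℕ}

lemma betaKT_nonneg (hcβ : 0 ≤ cβ) (hsmall : ∀ l ∈ Icc (k + 1) t, betaStep cβ ν l * σ ≤ 1) :
    0 ≤ betaKT cβ σ ν k t :=
  mul_nonneg (div_nonneg hcβ (by positivity))
    (prod_nonneg fun l hl => sub_nonneg.2 (hsmall l hl))

lemma prod_one_sub_betaStep_le (hcβ : 0 ≤ cβ) (hσ : 0 ≤ σ) (hν : ν ≤ 1)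
    (hsmall : ∀ l ∈ Icc (k + 1) t, betaStep cβ ν l * σ ≤ 1) (hkt : k ≤ t) :
    ∏ l ∈ Icc (k + 1) t, (1 - betaStep cβ ν l * σ)
      ≤ (((k : ℝ) + 2) / ((t : ℝ) + 2)) ^ (cβ * σ) := by
  have factor_le : ∀ l ∈ Icc (k + 1) t,
      1 - betaStep cβ ν l * σ ≤ (((l : ℝ) + 1) / ((l : ℝ) + 2)) ^ (cβ * σ) := by
    intro l _
    have := one_sub_div_rpow_le_div_add_one_rpow (mul_nonneg hcβ hσ) hν
      (by linarith [l.cast_nonneg (α := ℝ)] : (1 : ℝ) ≤ l + 1)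
    rwa [betaStep, div_mul_eq_mul_div, show (l : ℝ) + 2 = l + 1 + 1 by ring]
  calc ∏ l ∈ Icc (k + 1) t, (1 - betaStep cβ ν l * σ)
      ≤ ∏ l ∈ Icc (k + 1) t, (((l : ℝ) + 1) / ((l : ℝ) + 2)) ^ (cβ * σ) :=
        prod_le_prod (fun l hl => sub_nonneg.2 (hsmall l hl)) factor_le
    _ = (((k : ℝ) + 2) / ((t : ℝ) + 2)) ^ (cβ * σ) := by
        rw [finsetProd_rpow _ _ (fun l _ => by positivity), prod_Icc_add_one_div_add_two hkt]

lemma betaKT_le (hcβ : 0 ≤ cβ) (hσ : 0 ≤ σ) (hν : ν ≤ 1)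
    (hsmall : ∀ l ∈ Icc (k + 1) t, betaStep cβ ν l * σ ≤ 1) (hkt : k ≤ t) :
    betaKT cβ σ ν k t
      ≤ 2 ^ (cβ * σ) * cβ * ((k : ℝ) + 1) ^ (cβ * σ - ν) / ((t : ℝ) + 2) ^ (cβ * σ) := by
  have hk : (0 : ℝ) < k + 1 := by positivity
  calc betaKT cβ σ ν k t ≤ betaStep cβ ν k * (((k : ℝ) + 2) / ((t : ℝ) + 2)) ^ (cβ * σ) :=
        mul_le_mul_of_nonneg_left (prod_one_sub_betaStep_le hcβ hσ hν hsmall hkt)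
          (div_nonneg hcβ (by positivity))
    _ ≤ betaStep cβ ν k * ((2 * ((k : ℝ) + 1)) / ((t : ℝ) + 2)) ^ (cβ * σ) := by
        unfold betaStep
        gcongr
        linarith
    _ = 2 ^ (cβ * σ) * cβ * ((k : ℝ) + 1) ^ (cβ * σ - ν) / ((t : ℝ) + 2) ^ (cβ * σ) := by
        rw [betaStep, div_rpow (by positivity) (by positivity), mul_rpow zero_le_two hk.le,
          rpow_sub hk]
        ring

lemma betaKT_sq_le (hcβ : 0 ≤ cβ) (hσ : 0 ≤ σ) (hν : ν ≤ 1)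
    (hsmall : ∀ l ∈ Icc (k + 1) t, betaStep cβ ν l * σ ≤ 1) (hkt : k ≤ t) :
    betaKT cβ σ ν k t ^ 2
      ≤ 4 ^ (cβ * σ) * cβ ^ 2 / ((t : ℝ) + 2) ^ (2 * (cβ * σ))
          * ((k : ℝ) + 1) ^ (2 * (cβ * σ) - 2 * ν) := by
  have hk : (0 : ℝ) < k + 1 := by positivity
  have hsq : ∀ {x : ℝ}, 0 ≤ x → ∀ y : ℝ, (x ^ y) ^ 2 = x ^ (2 * y) := fun hx y => by
    rw [← rpow_mul_natCast hx, mul_comm]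
    norm_num
  calc betaKT cβ σ ν k t ^ 2
      ≤ (2 ^ (cβ * σ) * cβ * ((k : ℝ) + 1) ^ (cβ * σ - ν) / ((t : ℝ) + 2) ^ (cβ * σ)) ^ 2 :=
        pow_le_pow_left₀ (betaKT_nonneg hcβ hsmall) (betaKT_le hcβ hσ hν hsmall hkt) 2
    _ = _ := by
        rw [div_pow, mul_pow, mul_pow, hsq zero_le_two, hsq hk.le, hsq (by positivity),
          show (4 : ℝ) = 2 ^ (2 : ℝ) by norm_num, ← rpow_mul zero_le_two]
        ring_nf

end StepSizes

theorem sum_betaKT_sq_le_general (cβ σ ν : ℝ) (hcβ : 0 < cβ) (hσ : 0 < σ)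
    (hν1 : ν ≤ 1) (t : ℕ)
    (hsmall : ∀ l : ℕ, l ≤ t → betaStep cβ ν l * σ ≤ 1)
    (hpos : 0 < 2 * (cβ * σ) - 2 * ν + 1) :
    ∑ k ∈ Finset.Icc 1 t, betaKT cβ σ ν k t ^ 2
      ≤ (4 : ℝ) ^ (cβ * σ) * cβ ^ 2 / (2 * (cβ * σ) - 2 * ν + 1)
          * ((t : ℝ) + 2) ^ (1 - 2 * ν) := by
  set a := cβ * σ
  set C := (4 : ℝ) ^ a * cβ ^ 2 / ((t : ℝ) + 2) ^ (2 * a)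
  have hT : (0 : ℝ) < t + 2 := by positivity
  calc ∑ k ∈ Icc 1 t, betaKT cβ σ ν k t ^ 2
      ≤ ∑ k ∈ Icc 1 t, C * ((k : ℝ) + 1) ^ (2 * a - 2 * ν) :=
        sum_le_sum fun k hk => betaKT_sq_le hcβ.le hσ.le hν1
          (fun l hl => hsmall l (mem_Icc.1 hl).2) (mem_Icc.1 hk).2
    _ = C * ∑ k ∈ Icc 1 t, ((k : ℝ) + 1) ^ (2 * a - 2 * ν) := (mul_sum _ _ _).symm
    _ ≤ C * (((t : ℝ) + 2) ^ (2 * a - 2 * ν + 1) / (2 * a - 2 * ν + 1)) := by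
        gcongr
        exact sum_Icc_add_one_rpow_le (by linarith) t
    _ = 4 ^ a * cβ ^ 2 / (2 * a - 2 * ν + 1) * ((t : ℝ) + 2) ^ (1 - 2 * ν) := by
        rw [show 2 * a - 2 * ν + 1 = 2 * a + (1 - 2 * ν) by ring, rpow_add hT]
        simp only [C]
        field_simp

/-- if `2 c_β σ − 2ν + 1 > 0`, then for every `t ≥ 1`,
`Σ_{k=1}^{t} β_{k,t}² ≤ (4^{c_β σ} c_β² / (2 c_β σ − 2ν + 1)) (t+2)^{1−2ν}`. -/
theorem sum_betaKT_sq_le (cβ σ ν : ℝ) (hcβ : 0 < cβ) (hσ : 0 < σ) (hσ1 : σ ≤ 1)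
    (hν : 0 < ν) (hν1 : ν ≤ 1) (t : ℕ) (ht : 1 ≤ t)
    (hsmall : ∀ l : ℕ, l ≤ t → betaStep cβ ν l * σ ≤ 1)
    (hpos : 0 < 2 * (cβ * σ) - 2 * ν + 1) :
    ∑ k ∈ Finset.Icc 1 t, betaKT cβ σ ν k t ^ 2
      ≤ (4 : ℝ) ^ (cβ * σ) * cβ ^ 2 / (2 * (cβ * σ) - 2 * ν + 1)
          * ((t : ℝ) + 2) ^ (1 - 2 * ν) :=
  sum_betaKT_sq_le_general cβ σ ν hcβ hσ hν1 t hsmall hpos
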